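/- Let V be a finite-dimensional real vector space and let g₀ and g₁ be two inner products on V such that ‖g₁ − g₀‖_{g₀} ≤ 1/2, where ‖·‖_{g₀} denotes the norm on symmetric bilinear forms induced by g₀. Then for every symmetric bilinear form h on V, |tr_{g₁}(h) − tr_{g₀}(h)| ≤ 2 · ‖g₁ − g₀‖_{g₀} · ‖h‖_{g₀}. -/

import Mathlib

/-!
In a `g₀`-orthonormal basis, write `E` for the Gram matrix of `g₁ - g₀`, `M` for that of `h`
and `A` for the transpose of the matrix of `H₁`. Then `H₀` has matrix `M` and
`g₁(H₁ ·, ·) = h` reads `A (1 + E) = M`, so `tr H₀ - tr H₁ = tr (A E)`, which is at most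
`‖A‖ ‖E‖` in Frobenius norm. Finally `A = M - A E` gives `‖A‖ ≤ ‖M‖ + ‖A‖ / 2`, i.e.
`‖A‖ ≤ 2 ‖M‖`.
-/

open Finset Matrix
open scoped Matrix.Norms.Frobenius

theorem norm_le_two_mul_of_add_mul_eq {R : Type*} [NonUnitalSeminormedRing R] {a e c : R}
    (h : a + a * e = c) (he : ‖e‖ ≤ 1 / 2) : ‖a‖ ≤ 2 * ‖c‖ := by
  have hac : ‖a‖ ≤ ‖c‖ + ‖a‖ * ‖e‖ := by
    rw [← h]
    calc ‖a‖ = ‖a + a * e - a * e‖ := by rw [add_sub_cancel_right]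
      _ ≤ ‖a + a * e‖ + ‖a * e‖ := norm_sub_le _ _
      _ ≤ ‖a + a * e‖ + ‖a‖ * ‖e‖ := by gcongr; exact norm_mul_le a e
  nlinarith [mul_le_mul_of_nonneg_left he (norm_nonneg a)]

namespace Matrix

variable {m n α 𝕜 : Type*} [Fintype m] [Fintype n]

theorem frobenius_norm_eq_sqrt [SeminormedAddCommGroup α] (A : Matrix m n α) :
    ‖A‖ = √(∑ i, ∑ j, ‖A i j‖ ^ 2) := by
  simp only [frobenius_norm_def, Real.sqrt_eq_rpow, Real.rpow_two]

theorem frobenius_norm_eq_sqrt_sum_sq (A : Matrix m n ℝ) :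
    ‖A‖ = √(∑ i, ∑ j, A i j ^ 2) := by
  simp only [frobenius_norm_eq_sqrt, Real.norm_eq_abs, sq_abs]

theorem norm_trace_mul_le [RCLike 𝕜] (A : Matrix m n 𝕜) (B : Matrix n m 𝕜) :
    ‖trace (A * B)‖ ≤ ‖A‖ * ‖B‖ := by
  have hB : ‖B‖ = √(∑ i, ∑ j, ‖B j i‖ ^ 2) := by rw [frobenius_norm_eq_sqrt, Finset.sum_comm]
  rw [frobenius_norm_eq_sqrt, hB]
  simp only [← Fintype.sum_prod_type']
  calc ‖trace (A * B)‖ = ‖∑ p : m × n, A p.1 p.2 * B p.2 p.1‖ := by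
        simp only [trace, diag, mul_apply, Fintype.sum_prod_type]
    _ ≤ ∑ p : m × n, ‖A p.1 p.2‖ * ‖B p.2 p.1‖ := by
        refine (norm_sum_le _ _).trans_eq ?_
        simp only [norm_mul]
    _ ≤ _ := Real.sum_mul_le_sqrt_mul_sqrt _ _ _

theorem norm_trace_sub_le_of_add_mul_eq [RCLike 𝕜] [DecidableEq m] {A E C : Matrix m m 𝕜}
    (h : A + A * E = C) (hE : ‖E‖ ≤ 1 / 2) : ‖trace A - trace C‖ ≤ 2 * ‖E‖ * ‖C‖ := by
  have htrace : trace A - trace C = -trace (A * E) := by rw [← h, trace_add]; ring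
  calc ‖trace A - trace C‖ = ‖trace (A * E)‖ := by rw [htrace, norm_neg]
    _ ≤ ‖A‖ * ‖E‖ := norm_trace_mul_le A E
    _ ≤ 2 * ‖C‖ * ‖E‖ := by gcongr; exact norm_le_two_mul_of_add_mul_eq h hE
    _ = 2 * ‖E‖ * ‖C‖ := by ring

end Matrix

theorem trace_comparison_general
    {V : Type*} [AddCommGroup V] [Module ℝ V]
    {n : ℕ} (b : Module.Basis (Fin n) ℝ V)
    (g₀ g₁ h : LinearMap.BilinForm ℝ V)
    (hortho : ∀ i j, g₀ (b i) (b j) = if i = j then 1 else 0)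
    (H₀ H₁ : V →ₗ[ℝ] V)
    (hH₀ : ∀ x y, g₀ (H₀ x) y = h x y)
    (hH₁ : ∀ x y, g₁ (H₁ x) y = h x y)
    (hclose : Real.sqrt (∑ i, ∑ j, (g₁ (b i) (b j) - g₀ (b i) (b j)) ^ 2) ≤ 1 / 2) :
    |LinearMap.trace ℝ V H₁ - LinearMap.trace ℝ V H₀| ≤
      2 * Real.sqrt (∑ i, ∑ j, (g₁ (b i) (b j) - g₀ (b i) (b j)) ^ 2)
        * Real.sqrt (∑ i, ∑ j, (h (b i) (b j)) ^ 2) := by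
  open LinearMap.BilinForm in
  set E := toMatrix b g₁ - toMatrix b g₀
  set C := toMatrix b h
  have hG₀ : toMatrix b g₀ = 1 := by ext i j; simp [hortho, one_apply]
  have hgram (g : LinearMap.BilinForm ℝ V) (H : V →ₗ[ℝ] V) (hH : ∀ x y, g (H x) y = h x y) :
      (LinearMap.toMatrix b b H)ᵀ * toMatrix b g = C := by
    rw [← toMatrix_compLeft]; congr 1; ext x y; exact hH x y
  have hC : trace C = LinearMap.trace ℝ V H₀ := by
    rw [LinearMap.trace_eq_matrix_trace ℝ b, ← trace_transpose (LinearMap.toMatrix b b H₀),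
      ← hgram g₀ H₀ hH₀, hG₀, mul_one]
  have hA : (LinearMap.toMatrix b b H₁)ᵀ + (LinearMap.toMatrix b b H₁)ᵀ * E = C := by
    rw [← hgram g₁ H₁ hH₁, show toMatrix b g₁ = 1 + E by simp [E, hG₀]]; noncomm_ring
  have hnormE : ‖E‖ = √(∑ i, ∑ j, (g₁ (b i) (b j) - g₀ (b i) (b j)) ^ 2) := by
    simp [frobenius_norm_eq_sqrt_sum_sq, E]
  have hnormC : ‖C‖ = √(∑ i, ∑ j, (h (b i) (b j)) ^ 2) := by
    simp [frobenius_norm_eq_sqrt_sum_sq, C]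
  have hbound := norm_trace_sub_le_of_add_mul_eq hA (hnormE ▸ hclose)
  rwa [trace_transpose, ← LinearMap.trace_eq_matrix_trace, hC, Real.norm_eq_abs, hnormE,
    hnormC] at hbound

/-- Trace comparison: if `g₀, g₁` are inner products on a finite-dimensional real vector
space `V` with `‖g₁ - g₀‖_{g₀} ≤ 1/2` (Frobenius norm w.r.t. a `g₀`-orthonormal basis `b`),
then for every symmetric bilinear form `h` with `g₀`-trace endomorphism `H₀` and
`g₁`-trace endomorphism `H₁`, the traces differ by at most `2‖g₁-g₀‖_{g₀}‖h‖_{g₀}`. -/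
theorem trace_comparison
    {V : Type*} [AddCommGroup V] [Module ℝ V] [FiniteDimensional ℝ V]
    {n : ℕ} (b : Module.Basis (Fin n) ℝ V)
    (g₀ g₁ h : LinearMap.BilinForm ℝ V)
    (hg₀sym : ∀ x y, g₀ x y = g₀ y x) (hg₁sym : ∀ x y, g₁ x y = g₁ y x)
    (hhsym : ∀ x y, h x y = h y x)
    (hg₀pos : ∀ x, x ≠ 0 → 0 < g₀ x x) (hg₁pos : ∀ x, x ≠ 0 → 0 < g₁ x x)
    (hortho : ∀ i j, g₀ (b i) (b j) = if i = j then 1 else 0)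
    (H₀ H₁ : V →ₗ[ℝ] V)
    (hH₀ : ∀ x y, g₀ (H₀ x) y = h x y)
    (hH₁ : ∀ x y, g₁ (H₁ x) y = h x y)
    (hclose : Real.sqrt (∑ i, ∑ j, (g₁ (b i) (b j) - g₀ (b i) (b j)) ^ 2) ≤ 1 / 2) :
    |LinearMap.trace ℝ V H₁ - LinearMap.trace ℝ V H₀| ≤
      2 * Real.sqrt (∑ i, ∑ j, (g₁ (b i) (b j) - g₀ (b i) (b j)) ^ 2)
        * Real.sqrt (∑ i, ∑ j, (h (b i) (b j)) ^ 2) :=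
  trace_comparison_general b g₀ g₁ h hortho H₀ H₁ hH₀ hH₁ hclose
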